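/- Cut the regular hexagon with opposite sides at distance 1 into two congruent pentagons by the perpendicular bisector of one of its sides. Each pentagon has circumradius √(13/48). Consequently, for every n-point set of diameter at most 1 and every r ≥ √(13/48), some closed disc of radius r contains at least ⌈n/2⌉ of the points. -/

import Mathlib

open Metric Real
open scoped RealInnerProductSpace Classical

/-- The regular hexagon whose opposite sides are at distance 1, realized as the
intersection of three strips of width 1 whose normals make angles `kπ/3`; its two vertical
sides lie on the lines `x₀ = ±1/2`, and the perpendicular bisector of either of these
sides is the line `x₁ = 0`. -/
def regularHexagon : Set (EuclideanSpace ℝ (Fin 2)) :=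
  {x | ∀ k : Fin 3, |⟪x, (WithLp.toLp 2 ![cos (k * π / 3), sin (k * π / 3)] : EuclideanSpace ℝ (Fin 2))⟫| ≤ 1 / 2}

private lemma core_aux' {a b s : ℝ} (hs : s^2 = 3) (hsp : 0 < s) (ha0 : 0 ≤ a) (ha : a ≤ 1/2)
    (hb : 0 ≤ b) (hsb : s*b ≤ 1 - a) : a^2 + (b - s/12)^2 ≤ 13/48 := by
  have e1 : s*(b*b) ≤ b*(1-a) := by nlinarith [mul_le_mul_of_nonneg_left hsb hb]
  have e2 : s*b*(1/2-a) ≤ (1-a)*(1/2-a) :=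
    mul_le_mul_of_nonneg_right hsb (by linarith)
  have k1 : 3*a^2 + s*b*(1/2-a) ≤ 3/4 := by
    nlinarith [e2, mul_nonneg (show (0:ℝ) ≤ 1/2 - a by linarith) (show (0:ℝ) ≤ 8*a+1 by linarith)]
  have k2 : s*(s*a^2 + b*(1/2-a)) ≤ s*(s/4) := by nlinarith [k1]
  have k3 : s*a^2 + b*(1/2-a) ≤ s/4 := le_of_mul_le_mul_left k2 hsp
  have k4 : s*(a^2 + (b - s/12)^2) ≤ s*(13/48) := by nlinarith [e1, k3]
  exact le_of_mul_le_mul_left k4 hsp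

private lemma core_ineq' {a b s : ℝ} (hs : s^2 = 3) (hs0 : 0 ≤ s) (h1 : |a| ≤ 1/2)
    (h2 : |a + s*b| ≤ 1) (h3 : |-a + s*b| ≤ 1) (hb : 0 ≤ b) :
    a^2 + (b - s/12)^2 ≤ 13/48 := by
  have hsp : 0 < s := lt_of_le_of_ne hs0 (by rintro rfl; norm_num at hs)
  rw [abs_le] at h1 h2 h3
  rcases le_or_gt 0 a with haa | haa
  · exact core_aux' hs hsp haa h1.2 hb (by linarith [h2.2])
  · have := core_aux' (a := -a) hs hsp (by linarith) (by linarith [h1.1]) hb (by linarith [h3.2])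
    calc a^2 + (b - s/12)^2 = (-a)^2 + (b-s/12)^2 := by ring
    _ ≤ 13/48 := this

private lemma pentagon_scalar' {q c s a0 a1 : ℝ} (hq : q^2 = 3) (hq0 : 0 ≤ q)
    (hcs : c^2 + s^2 = 1)
    (h0 : |a0*c + a1*s| ≤ 1/2)
    (h1 : |a0*(c/2 - q*s/2) + a1*(s/2 + q*c/2)| ≤ 1/2)
    (h2 : |a0*(-c/2 - q*s/2) + a1*(-s/2 + q*c/2)| ≤ 1/2)
    (hb : 0 ≤ -a0*s + a1*c) :
    (a0 + (q/12)*s)^2 + (a1 - (q/12)*c)^2 ≤ 13/48 := by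
  set A := a0*c + a1*s with hA
  set B := -a0*s + a1*c with hB
  have h1' : |A + q*B| ≤ 1 := by
    have e : A + q*B = 2*(a0*(c/2 - q*s/2) + a1*(s/2 + q*c/2)) := by rw [hA, hB]; ring
    rw [e, abs_mul, abs_two]
    calc (2:ℝ) * |a0*(c/2 - q*s/2) + a1*(s/2 + q*c/2)| ≤ 2 * (1/2) :=
          mul_le_mul_of_nonneg_left h1 (by norm_num)
    _ = 1 := by norm_num
  have h2' : |-A + q*B| ≤ 1 := by
    have e : -A + q*B = 2*(a0*(-c/2 - q*s/2) + a1*(-s/2 + q*c/2)) := by rw [hA, hB]; ring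
    rw [e, abs_mul, abs_two]
    calc (2:ℝ) * |a0*(-c/2 - q*s/2) + a1*(-s/2 + q*c/2)| ≤ 2 * (1/2) :=
          mul_le_mul_of_nonneg_left h2 (by norm_num)
    _ = 1 := by norm_num
  have key := core_ineq' hq hq0 h0 h1' h2' hb
  have expand : (a0 + (q/12)*s)^2 + (a1 - (q/12)*c)^2 = A^2 + (B - q/12)^2 := by
    rw [hA, hB]; linear_combination ((q/12)^2 - a0^2 - a1^2) * hcs
  rw [expand]; exact key

private lemma dist_le_sqrt' {x y : EuclideanSpace ℝ (Fin 2)} {D : ℝ}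
    (h : (x 0 - y 0)^2 + (x 1 - y 1)^2 ≤ D) : dist x y ≤ Real.sqrt D := by
  rw [EuclideanSpace.dist_eq]
  apply Real.sqrt_le_sqrt
  simpa [Fin.sum_univ_two, Real.dist_eq, sq_abs] using h

private lemma hexagon_constraints {x : EuclideanSpace ℝ (Fin 2)} (hx : x ∈ regularHexagon) :
    |x 0| ≤ 1/2 ∧ |x 0 * (1/2) + x 1 * (Real.sqrt 3/2)| ≤ 1/2
      ∧ |x 0 * (-(1/2)) + x 1 * (Real.sqrt 3/2)| ≤ 1/2 := by
  have h0 := hx 0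
  have h1 := hx 1
  have h2 := hx 2
  simp only [regularHexagon, Set.mem_setOf_eq] at *
  simp only [PiLp.inner_apply, RCLike.inner_apply, conj_trivial, Fin.sum_univ_two,
    Matrix.cons_val_zero, Matrix.cons_val_one, Matrix.head_cons] at h0 h1 h2
  norm_num at h0 h1 h2
  have h23 : 2 * π / 3 = π - π/3 := by ring
  rw [h23, Real.cos_pi_sub, Real.sin_pi_sub, Real.cos_pi_div_three, Real.sin_pi_div_three] at h2
  exact ⟨by simpa using h0, by simpa [mul_comm] using h1, by simpa [mul_comm] using h2⟩

private lemma q3_sq : (Real.sqrt 3)^2 = 3 := Real.sq_sqrt (by norm_num)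

private lemma pentagon_upper :
    {x ∈ regularHexagon | 0 ≤ x 1} ⊆
      closedBall (WithLp.toLp 2 ![0, Real.sqrt 3/12] : EuclideanSpace ℝ (Fin 2)) (Real.sqrt (13/48)) := by
  rintro x ⟨hx, hx1⟩
  obtain ⟨h0, h1, h2⟩ := hexagon_constraints hx
  set q := Real.sqrt 3 with hqdef
  have key := pentagon_scalar' (q := q) (c := 1) (s := 0) (a0 := x 0) (a1 := x 1)
    q3_sq (Real.sqrt_nonneg 3) (by norm_num)
    (by rw [show x 0*(1:ℝ) + x 1*(0:ℝ) = x 0 from by ring]; exact h0)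
    (by rw [show x 0*((1:ℝ)/2 - q*0/2) + x 1*((0:ℝ)/2 + q*1/2) = x 0*(1/2) + x 1*(q/2) from by ring]
        exact h1)
    (by rw [show x 0*(-(1:ℝ)/2 - q*0/2) + x 1*(-(0:ℝ)/2 + q*1/2) = x 0*(-(1/2)) + x 1*(q/2) from by ring]
        exact h2)
    (by rw [show -(x 0)*(0:ℝ) + x 1*(1:ℝ) = x 1 from by ring]; exact hx1)
  rw [mem_closedBall]
  apply dist_le_sqrt'
  have e0 : (WithLp.toLp 2 ![0, Real.sqrt 3/12] : EuclideanSpace ℝ (Fin 2)) 0 = 0 := rfl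
  have e1 : (WithLp.toLp 2 ![0, Real.sqrt 3/12] : EuclideanSpace ℝ (Fin 2)) 1 = Real.sqrt 3/12 := rfl
  rw [e0, e1]
  calc (x 0 - 0)^2 + (x 1 - q/12)^2 = (x 0 + (q/12)*0)^2 + (x 1 - (q/12)*1)^2 := by ring
  _ ≤ 13/48 := key

private lemma pentagon_lower :
    {x ∈ regularHexagon | x 1 ≤ 0} ⊆
      closedBall (WithLp.toLp 2 ![0, -(Real.sqrt 3/12)] : EuclideanSpace ℝ (Fin 2)) (Real.sqrt (13/48)) := by
  rintro x ⟨hx, hx1⟩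
  obtain ⟨h0, h1, h2⟩ := hexagon_constraints hx
  set q := Real.sqrt 3 with hqdef
  have key := pentagon_scalar' (q := q) (c := -1) (s := 0) (a0 := x 0) (a1 := x 1)
    q3_sq (Real.sqrt_nonneg 3) (by norm_num)
    (by rw [show x 0*(-1:ℝ) + x 1*(0:ℝ) = -(x 0) from by ring, abs_neg]; exact h0)
    (by rw [show x 0*((-1:ℝ)/2 - q*0/2) + x 1*((0:ℝ)/2 + q*(-1)/2)
          = -(x 0*(1/2) + x 1*(q/2)) from by ring, abs_neg]
        exact h1)
    (by rw [show x 0*(-(-1:ℝ)/2 - q*0/2) + x 1*(-(0:ℝ)/2 + q*(-1)/2)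
          = -(x 0*(-(1/2)) + x 1*(q/2)) from by ring, abs_neg]
        exact h2)
    (by rw [show -(x 0)*(0:ℝ) + x 1*(-1:ℝ) = -(x 1) from by ring]; linarith)
  rw [mem_closedBall]
  apply dist_le_sqrt'
  have e0 : (WithLp.toLp 2 ![0, -(Real.sqrt 3/12)] : EuclideanSpace ℝ (Fin 2)) 0 = 0 := rfl
  have e1 : (WithLp.toLp 2 ![0, -(Real.sqrt 3/12)] : EuclideanSpace ℝ (Fin 2)) 1 = -(Real.sqrt 3/12) := rfl
  rw [e0, e1]
  calc (x 0 - 0)^2 + (x 1 - -(q/12))^2 = (x 0 + (q/12)*0)^2 + (x 1 - (q/12)*(-1))^2 := by ring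
  _ ≤ 13/48 := key

private lemma exists_half_disc (n : ℕ) (hn : 0 < n) (P : Fin n → EuclideanSpace ℝ (Fin 2))
    (hP : ∀ i j, dist (P i) (P j) ≤ 1) :
    ∃ c : EuclideanSpace ℝ (Fin 2),
      ⌈(n : ℝ) / 2⌉₊ ≤ (Finset.univ.filter (fun i => dist (P i) c ≤ Real.sqrt (13/48))).card := by
  have ne : (Finset.univ : Finset (Fin n)).Nonempty := ⟨⟨0, hn⟩, Finset.mem_univ _⟩
  set g : Fin n → ℝ → ℝ := fun i θ => P i 0 * Real.cos θ + P i 1 * Real.sin θ with hgdef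
  have hgcont : ∀ i, Continuous (g i) := fun i =>
    (continuous_const.mul Real.continuous_cos).add (continuous_const.mul Real.continuous_sin)
  set M : ℝ → ℝ := fun θ => Finset.univ.sup' ne (fun i => g i θ) with hMdef
  set m : ℝ → ℝ := fun θ => Finset.univ.inf' ne (fun i => g i θ) with hmdef
  have hMcont : Continuous M := Continuous.finset_sup'_apply ne (fun i _ => hgcont i)
  have hmcont : Continuous m := Continuous.finset_inf'_apply ne (fun i _ => hgcont i)
  set cf : ℝ → ℝ := fun θ => (M θ + m θ)/2 with hcfdef
  have hcfcont : Continuous cf := (hMcont.add hmcont).div_const 2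
  clear_value g M m cf
  have hMφ : ∀ φ, M φ = Finset.univ.sup' ne (fun i => g i φ) := fun φ => by rw [hMdef]
  have hmφ : ∀ φ, m φ = Finset.univ.inf' ne (fun i => g i φ) := fun φ => by rw [hmdef]
  have hcfφ : ∀ φ, cf φ = (M φ + m φ)/2 := fun φ => by rw [hcfdef]
  have hgφ : ∀ i φ, g i φ = P i 0 * Real.cos φ + P i 1 * Real.sin φ := fun i φ => by rw [hgdef]
  -- diameter bound
  have hgdiff : ∀ i j φ, g i φ - g j φ ≤ 1 := by
    intro i j φ
    have hd := hP i j
    rw [EuclideanSpace.dist_eq] at hd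
    simp only [Fin.sum_univ_two, Real.dist_eq, sq_abs] at hd
    have hnn : (0:ℝ) ≤ (P i 0 - P j 0)^2 + (P i 1 - P j 1)^2 := by positivity
    have hsq : (P i 0 - P j 0)^2 + (P i 1 - P j 1)^2 ≤ 1 := by
      nlinarith [Real.sq_sqrt hnn, Real.sqrt_nonneg ((P i 0 - P j 0)^2 + (P i 1 - P j 1)^2)]
    have hpy := Real.sin_sq_add_cos_sq φ
    rw [hgφ i φ, hgφ j φ]
    nlinarith [sq_nonneg ((P i 0 - P j 0) * Real.sin φ - (P i 1 - P j 1) * Real.cos φ),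
      sq_nonneg ((P i 0 - P j 0) * Real.cos φ + (P i 1 - P j 1) * Real.sin φ - 1),
      mul_le_mul_of_nonneg_right hsq (show (0:ℝ) ≤ Real.sin φ^2 + Real.cos φ^2 by positivity)]
  have hwidth : ∀ φ, M φ - m φ ≤ 1 := by
    intro φ
    obtain ⟨i0, -, hi0⟩ := Finset.exists_mem_eq_sup' ne (fun i => g i φ)
    obtain ⟨j0, -, hj0⟩ := Finset.exists_mem_eq_inf' ne (fun i => g i φ)
    rw [hMφ φ, hmφ φ, hi0, hj0]
    exact hgdiff i0 j0 φ
  have hstrip : ∀ i φ, |g i φ - cf φ| ≤ 1/2 := by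
    intro i φ
    have h1 : g i φ ≤ M φ := by
      rw [hMφ φ]; exact Finset.le_sup' (fun i => g i φ) (Finset.mem_univ i)
    have h2 : m φ ≤ g i φ := by
      rw [hmφ φ]; exact Finset.inf'_le (fun i => g i φ) (Finset.mem_univ i)
    have h3 := hwidth φ
    rw [abs_le, hcfφ φ]
    constructor <;> linarith
  -- antiperiodicity
  have hgneg : ∀ i φ, g i (φ + π) = -g i φ := by
    intro i φ
    rw [hgφ, hgφ, Real.cos_add, Real.sin_add, Real.cos_pi, Real.sin_pi]
    ring
  have hMneg : ∀ φ, M (φ + π) = -(m φ) := by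
    intro φ
    rw [hMφ, hmφ]
    apply le_antisymm
    · apply Finset.sup'_le
      intro i _
      rw [hgneg i φ, neg_le_neg_iff]
      exact Finset.inf'_le (fun i => g i φ) (Finset.mem_univ i)
    · obtain ⟨j0, -, hj0⟩ := Finset.exists_mem_eq_inf' ne (fun i => g i φ)
      rw [hj0, ← hgneg j0 φ]
      exact Finset.le_sup' (fun i => g i (φ + π)) (Finset.mem_univ j0)
  have hmneg : ∀ φ, m (φ + π) = -(M φ) := by
    intro φ
    rw [hMφ, hmφ]
    apply le_antisymm
    · obtain ⟨j0, -, hj0⟩ := Finset.exists_mem_eq_sup' ne (fun i => g i φ)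
      rw [hj0, ← hgneg j0 φ]
      exact Finset.inf'_le (fun i => g i (φ + π)) (Finset.mem_univ j0)
    · apply Finset.le_inf'
      intro i _
      rw [hgneg i φ, neg_le_neg_iff]
      exact Finset.le_sup' (fun i => g i φ) (Finset.mem_univ i)
  have hcfneg : ∀ φ, cf (φ + π) = -(cf φ) := by
    intro φ
    rw [hcfφ, hcfφ, hMneg φ, hmneg φ]
    ring
  -- intermediate value
  set F : ℝ → ℝ := fun θ => cf θ - cf (θ + π/3) + cf (θ + 2*(π/3)) with hFdef
  have hFcont : Continuous F := by
    apply Continuous.add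
    · exact hcfcont.sub (hcfcont.comp (continuous_add_right (π/3)))
    · exact hcfcont.comp (continuous_add_right (2*(π/3)))
  clear_value F
  have hFφ : ∀ φ, F φ = cf φ - cf (φ + π/3) + cf (φ + 2*(π/3)) := fun φ => by rw [hFdef]
  have hFanti : F (π/3) = -(F 0) := by
    rw [hFφ, hFφ]
    have e1 : π/3 + π/3 = 0 + 2*(π/3) := by ring
    have e2 : π/3 + 2*(π/3) = 0 + π := by ring
    have e3 : (0:ℝ) + π/3 = π/3 := by ring
    rw [e1, e2, e3, hcfneg 0]
    ring
  have hivt : ∃ θ ∈ Set.Icc (0:ℝ) (π/3), F θ = 0 := by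
    have hpi3 : (0:ℝ) ≤ π/3 := by positivity
    rcases le_total (F 0) 0 with hF0 | hF0
    · have h0mem : (0:ℝ) ∈ Set.Icc (F 0) (F (π/3)) := ⟨hF0, by rw [hFanti]; linarith⟩
      obtain ⟨θ, hθ, hθ0⟩ := intermediate_value_Icc hpi3 hFcont.continuousOn h0mem
      exact ⟨θ, hθ, hθ0⟩
    · have h0mem : (0:ℝ) ∈ Set.Icc (F (π/3)) (F 0) := ⟨by rw [hFanti]; linarith, hF0⟩
      obtain ⟨θ, hθ, hθ0⟩ := intermediate_value_Icc' hpi3 hFcont.continuousOn h0mem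
      exact ⟨θ, hθ, hθ0⟩
  obtain ⟨θ, -, hFθ⟩ := hivt
  -- rotated frame data
  obtain ⟨q, hqeq⟩ : ∃ q, q = Real.sqrt 3 := ⟨_, rfl⟩
  have hq : q^2 = 3 := by rw [hqeq]; exact q3_sq
  have hq0 : (0:ℝ) ≤ q := by rw [hqeq]; exact Real.sqrt_nonneg 3
  obtain ⟨cθ, hcθ⟩ : ∃ c, c = Real.cos θ := ⟨_, rfl⟩
  obtain ⟨sθ, hsθ⟩ : ∃ s, s = Real.sin θ := ⟨_, rfl⟩
  have pyth : cθ^2 + sθ^2 = 1 := by rw [hcθ, hsθ]; exact Real.cos_sq_add_sin_sq θ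
  have hc1 : Real.cos (θ + π/3) = cθ/2 - q*sθ/2 := by
    rw [hcθ, hsθ, hqeq, Real.cos_add, Real.cos_pi_div_three, Real.sin_pi_div_three]; ring
  have hs1 : Real.sin (θ + π/3) = sθ/2 + q*cθ/2 := by
    rw [hcθ, hsθ, hqeq, Real.sin_add, Real.cos_pi_div_three, Real.sin_pi_div_three]; ring
  have hc2 : Real.cos (θ + 2*(π/3)) = -cθ/2 - q*sθ/2 := by
    have e : θ + 2*(π/3) = θ + (π - π/3) := by ring
    rw [hcθ, hsθ, hqeq, e, Real.cos_add, Real.cos_pi_sub, Real.sin_pi_sub,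
      Real.cos_pi_div_three, Real.sin_pi_div_three]; ring
  have hs2 : Real.sin (θ + 2*(π/3)) = -sθ/2 + q*cθ/2 := by
    have e : θ + 2*(π/3) = θ + (π - π/3) := by ring
    rw [hcθ, hsθ, hqeq, e, Real.sin_add, Real.cos_pi_sub, Real.sin_pi_sub,
      Real.cos_pi_div_three, Real.sin_pi_div_three]; ring
  obtain ⟨c0, hc0⟩ : ∃ c, c = cf θ := ⟨_, rfl⟩
  obtain ⟨c1, hc1'⟩ : ∃ c, c = cf (θ + π/3) := ⟨_, rfl⟩
  obtain ⟨c2, hc2'⟩ : ∃ c, c = cf (θ + 2*(π/3)) := ⟨_, rfl⟩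
  have hsum : c2 = c1 - c0 := by
    have h := hFφ θ
    rw [hFθ, ← hc0, ← hc1', ← hc2'] at h
    linarith [h.symm]
  -- the translation
  obtain ⟨t0, ht0def⟩ : ∃ t, t = (q/3)*(c0*sθ + q*c0*cθ - 2*c1*sθ) := ⟨_, rfl⟩
  obtain ⟨t1, ht1def⟩ : ∃ t, t = (q/3)*(2*c1*cθ - c0*cθ + q*c0*sθ) := ⟨_, rfl⟩
  have ht0 : t0*cθ + t1*sθ = c0 := by
    rw [ht0def, ht1def]
    linear_combination (q^2*c0/3) * pyth + (c0/3) * hq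
  have ht1 : t0*(cθ/2 - q*sθ/2) + t1*(sθ/2 + q*cθ/2) = c1 := by
    rw [ht0def, ht1def]
    linear_combination (q^2*c1/3) * pyth + (c1/3) * hq
  have ht2 : t0*(-cθ/2 - q*sθ/2) + t1*(-sθ/2 + q*cθ/2) = c1 - c0 := by
    rw [ht0def, ht1def]
    linear_combination (q^2*(c1-c0)/3) * pyth + ((c1-c0)/3) * hq
  -- per-point constraints
  have habs : ∀ i : Fin n,
      |(P i 0 - t0)*cθ + (P i 1 - t1)*sθ| ≤ 1/2 ∧
      |(P i 0 - t0)*(cθ/2 - q*sθ/2) + (P i 1 - t1)*(sθ/2 + q*cθ/2)| ≤ 1/2 ∧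
      |(P i 0 - t0)*(-cθ/2 - q*sθ/2) + (P i 1 - t1)*(-sθ/2 + q*cθ/2)| ≤ 1/2 := by
    intro i
    refine ⟨?_, ?_, ?_⟩
    · have h := hstrip i θ
      rw [hgφ, ← hcθ, ← hsθ, ← hc0] at h
      rw [show (P i 0 - t0)*cθ + (P i 1 - t1)*sθ
          = P i 0 * cθ + P i 1 * sθ - (t0*cθ + t1*sθ) from by ring, ht0]
      exact h
    · have h := hstrip i (θ + π/3)
      rw [hgφ, hc1, hs1, ← hc1'] at h
      rw [show (P i 0 - t0)*(cθ/2 - q*sθ/2) + (P i 1 - t1)*(sθ/2 + q*cθ/2)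
          = P i 0 * (cθ/2 - q*sθ/2) + P i 1 * (sθ/2 + q*cθ/2)
            - (t0*(cθ/2 - q*sθ/2) + t1*(sθ/2 + q*cθ/2)) from by ring, ht1]
      exact h
    · have h := hstrip i (θ + 2*(π/3))
      rw [hgφ, hc2, hs2, ← hc2'] at h
      rw [show (P i 0 - t0)*(-cθ/2 - q*sθ/2) + (P i 1 - t1)*(-sθ/2 + q*cθ/2)
          = P i 0 * (-cθ/2 - q*sθ/2) + P i 1 * (-sθ/2 + q*cθ/2)
            - (t0*(-cθ/2 - q*sθ/2) + t1*(-sθ/2 + q*cθ/2)) from by ring, ht2, ← hsum]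
      exact h
  -- the two candidate centers
  obtain ⟨Cp, hCp0, hCp1⟩ : ∃ C : EuclideanSpace ℝ (Fin 2),
      C 0 = t0 - (q/12)*sθ ∧ C 1 = t1 + (q/12)*cθ :=
    ⟨(WithLp.toLp 2 ![t0 - (q/12)*sθ, t1 + (q/12)*cθ] : EuclideanSpace ℝ (Fin 2)), rfl, rfl⟩
  obtain ⟨Cm, hCm0, hCm1⟩ : ∃ C : EuclideanSpace ℝ (Fin 2),
      C 0 = t0 + (q/12)*sθ ∧ C 1 = t1 - (q/12)*cθ :=
    ⟨(WithLp.toLp 2 ![t0 + (q/12)*sθ, t1 - (q/12)*cθ] : EuclideanSpace ℝ (Fin 2)), rfl, rfl⟩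
  have hup : ∀ i : Fin n, 0 ≤ -(P i 0 - t0)*sθ + (P i 1 - t1)*cθ →
      dist (P i) Cp ≤ Real.sqrt (13/48) := by
    intro i hb
    obtain ⟨h0, h1, h2⟩ := habs i
    have key := pentagon_scalar' (q := q) (c := cθ) (s := sθ)
      (a0 := P i 0 - t0) (a1 := P i 1 - t1) hq hq0 pyth h0 h1 h2 hb
    apply dist_le_sqrt'
    rw [hCp0, hCp1]
    calc (P i 0 - (t0 - (q/12)*sθ))^2 + (P i 1 - (t1 + (q/12)*cθ))^2
        = ((P i 0 - t0) + (q/12)*sθ)^2 + ((P i 1 - t1) - (q/12)*cθ)^2 := by ring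
    _ ≤ 13/48 := key
  have hdown : ∀ i : Fin n, -(P i 0 - t0)*sθ + (P i 1 - t1)*cθ ≤ 0 →
      dist (P i) Cm ≤ Real.sqrt (13/48) := by
    intro i hb
    obtain ⟨h0, h1, h2⟩ := habs i
    have pyth' : (-cθ)^2 + (-sθ)^2 = 1 := by linear_combination pyth
    have key := pentagon_scalar' (q := q) (c := -cθ) (s := -sθ)
      (a0 := P i 0 - t0) (a1 := P i 1 - t1) hq hq0 pyth'
      (by rw [show (P i 0 - t0)*(-cθ) + (P i 1 - t1)*(-sθ)
            = -((P i 0 - t0)*cθ + (P i 1 - t1)*sθ) from by ring, abs_neg]; exact h0)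
      (by rw [show (P i 0 - t0)*(-cθ/2 - q*(-sθ)/2) + (P i 1 - t1)*(-sθ/2 + q*(-cθ)/2)
            = -((P i 0 - t0)*(cθ/2 - q*sθ/2) + (P i 1 - t1)*(sθ/2 + q*cθ/2)) from by ring,
          abs_neg]; exact h1)
      (by rw [show (P i 0 - t0)*(-(-cθ)/2 - q*(-sθ)/2) + (P i 1 - t1)*(-(-sθ)/2 + q*(-cθ)/2)
            = -((P i 0 - t0)*(-cθ/2 - q*sθ/2) + (P i 1 - t1)*(-sθ/2 + q*cθ/2)) from by ring,
          abs_neg]; exact h2)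
      (by rw [show -(P i 0 - t0)*(-sθ) + (P i 1 - t1)*(-cθ)
            = -(-(P i 0 - t0)*sθ + (P i 1 - t1)*cθ) from by ring]; linarith)
    apply dist_le_sqrt'
    rw [hCm0, hCm1]
    calc (P i 0 - (t0 + (q/12)*sθ))^2 + (P i 1 - (t1 - (q/12)*cθ))^2
        = ((P i 0 - t0) + (q/12)*(-sθ))^2 + ((P i 1 - t1) - (q/12)*(-cθ))^2 := by ring
    _ ≤ 13/48 := key
  -- pigeonhole
  set S1 := Finset.univ.filter (fun i : Fin n => 0 ≤ -(P i 0 - t0)*sθ + (P i 1 - t1)*cθ) with hS1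
  set S2 := Finset.univ.filter (fun i : Fin n => -(P i 0 - t0)*sθ + (P i 1 - t1)*cθ ≤ 0) with hS2
  have hunion : S1 ∪ S2 = Finset.univ := by
    ext i
    simp only [hS1, hS2, Finset.mem_union, Finset.mem_filter, Finset.mem_univ, true_and,
      iff_true]
    exact le_total 0 (-(P i 0 - t0)*sθ + (P i 1 - t1)*cθ)
  have hcards : n ≤ S1.card + S2.card := by
    calc n = (Finset.univ : Finset (Fin n)).card := by simp
    _ = (S1 ∪ S2).card := by rw [hunion]
    _ ≤ S1.card + S2.card := Finset.card_union_le S1 S2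
  have hhalf : ∀ k : ℕ, n ≤ 2*k → ⌈(n : ℝ)/2⌉₊ ≤ k := by
    intro k hk
    apply Nat.ceil_le.mpr
    rw [div_le_iff₀ (by norm_num : (0:ℝ) < 2)]
    exact_mod_cast by linarith [hk]
  rcases le_total S1.card S2.card with hle | hle
  · refine ⟨Cm, ?_⟩
    have hsub : S2 ⊆ Finset.univ.filter (fun i => dist (P i) Cm ≤ Real.sqrt (13/48)) := by
      intro i hi
      rw [hS2, Finset.mem_filter] at hi
      rw [Finset.mem_filter]
      exact ⟨Finset.mem_univ i, hdown i hi.2⟩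
    calc ⌈(n : ℝ)/2⌉₊ ≤ S2.card := hhalf S2.card (by omega)
    _ ≤ _ := Finset.card_le_card hsub
  · refine ⟨Cp, ?_⟩
    have hsub : S1 ⊆ Finset.univ.filter (fun i => dist (P i) Cp ≤ Real.sqrt (13/48)) := by
      intro i hi
      rw [hS1, Finset.mem_filter] at hi
      rw [Finset.mem_filter]
      exact ⟨Finset.mem_univ i, hup i hi.2⟩
    calc ⌈(n : ℝ)/2⌉₊ ≤ S1.card := hhalf S1.card (by omega)
    _ ≤ _ := Finset.card_le_card hsub

/-- Cutting the regular hexagon with opposite sides at distance 1 along the perpendicular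
bisector of one of its sides gives two congruent pentagons, each contained in a closed
disc of radius `√(13/48)`. Consequently, for every `r ≥ √(13/48)`, every configuration of
`n` points of diameter at most 1 admits a closed disc of radius `r` containing at least
`⌈n/2⌉` of the points. -/
theorem hexagon_halves_and_pigeonhole :
    (∃ c₁ : EuclideanSpace ℝ (Fin 2),
      {x ∈ regularHexagon | 0 ≤ x 1} ⊆ closedBall c₁ (Real.sqrt (13 / 48))) ∧
    (∃ c₂ : EuclideanSpace ℝ (Fin 2),
      {x ∈ regularHexagon | x 1 ≤ 0} ⊆ closedBall c₂ (Real.sqrt (13 / 48))) ∧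
    ∀ (r : ℝ), Real.sqrt (13 / 48) ≤ r →
      ∀ (n : ℕ) (P : Fin n → EuclideanSpace ℝ (Fin 2)),
        (∀ i j, dist (P i) (P j) ≤ 1) →
        ∃ c : EuclideanSpace ℝ (Fin 2),
          ⌈(n : ℝ) / 2⌉₊ ≤ (Finset.univ.filter (fun i => P i ∈ closedBall c r)).card := by
  refine ⟨⟨_, pentagon_upper⟩, ⟨_, pentagon_lower⟩, ?_⟩
  intro r hr n P hP
  rcases Nat.eq_zero_or_pos n with rfl | hn
  · exact ⟨0, by simp⟩
  · obtain ⟨c, hc⟩ := exists_half_disc n hn P hP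
    refine ⟨c, le_trans hc (Finset.card_le_card ?_)⟩
    intro i hi
    rw [Finset.mem_filter] at hi ⊢
    exact ⟨Finset.mem_univ i, mem_closedBall.mpr (le_trans hi.2 hr)⟩
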